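/- arXiv:2205.04867 — 2 statements merged into one kernel-verified Lean document; each statement's English description precedes it below -/
import Mathlib

section
/- Let 0 < q < 1 and let p, r, y, f, h : ℝ → ℝ. Assume that for all x ≠ 0: (1/q)·(D_{q⁻¹}(D_q y))(x) + p(x)·(D_q y)(x) + r(x)·y(x) = 0, and (D_q f)(x) = p(x)·f(x). Then for all x ≠ 0, the q-derivative at x of the function G(x) := f(x)·( y(x)·(D_{q⁻¹}h)(x) − h(x)·(D_{q⁻¹}y)(x) ) equals f(x)·( (1/q)·(D_{q⁻¹}(D_q h))(x) + p(x)·(D_q h)(x) + r(x)·h(x) )·y(x). -/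
/-- The Jackson `q`-derivative `(D_q f)(x) = (f(x) - f(qx)) / ((1-q)x)`. -/
noncomputable def qDeriv (q : ℝ) (f : ℝ → ℝ) (x : ℝ) : ℝ :=
  (f x - f (q * x)) / ((1 - q) * x)

/-- The `q⁻¹`-derivative `(D_{q⁻¹} f)(x) = q (f(x/q) - f(x)) / ((1-q)x)`. -/
noncomputable def qInvDeriv (q : ℝ) (f : ℝ → ℝ) (x : ℝ) : ℝ :=
  q * (f (x / q) - f x) / ((1 - q) * x)

/-!
The Lagrange identity `D_q (f · W(y, h)) = f · (y · L h - h · L y)` holds for every `h`, where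
`L h = (1/q) D_{q⁻¹} D_q h + p D_q h + r h` and `W(y, h) = y D_{q⁻¹} h - h D_{q⁻¹} y`, as soon as
`D_q f = p f`; the hypothesis `L y = 0` then removes the second term. The identity follows from the
`q`-product rule together with `D_{q⁻¹} u (q x) = D_q u x` and `D_q D_{q⁻¹} = (1/q) D_{q⁻¹} D_q`:
the mixed terms `D_q y · D_q h` cancel, and the `p`-terms match because
`u (q x) = u x - (1 - q) x D_q u x`.
-/

noncomputable def qWronskian (q : ℝ) (y h : ℝ → ℝ) (t : ℝ) : ℝ :=
  y t * qInvDeriv q h t - h t * qInvDeriv q y t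

noncomputable def qLagrangeOp (q : ℝ) (p r h : ℝ → ℝ) (x : ℝ) : ℝ :=
  (1 / q) * qInvDeriv q (qDeriv q h) x + p x * qDeriv q h x + r x * h x

section

variable {q : ℝ}

theorem qDeriv_sub (f g : ℝ → ℝ) (x : ℝ) :
    qDeriv q (fun t => f t - g t) x = qDeriv q f x - qDeriv q g x := by
  simp only [qDeriv]
  ring

theorem qDeriv_mul (f g : ℝ → ℝ) (x : ℝ) :
    qDeriv q (fun t => f t * g t) x = f x * qDeriv q g x + g (q * x) * qDeriv q f x := by
  simp only [qDeriv]
  ring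

theorem apply_mul_eq_sub_qDeriv (hq1 : q ≠ 1) (f : ℝ → ℝ) {x : ℝ} (hx : x ≠ 0) :
    f (q * x) = f x - (1 - q) * x * qDeriv q f x := by
  have : (1 - q) * x ≠ 0 := mul_ne_zero (sub_ne_zero.mpr hq1.symm) hx
  simp only [qDeriv]
  field_simp
  ring

theorem qInvDeriv_eq_qDeriv_div (hq : q ≠ 0) (f : ℝ → ℝ) (x : ℝ) :
    qInvDeriv q f x = qDeriv q f (x / q) := by
  simp only [qInvDeriv, qDeriv, mul_div_cancel₀ x hq]
  rw [mul_div_assoc', div_div_eq_mul_div]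
  ring

theorem qInvDeriv_mul_left (hq : q ≠ 0) (f : ℝ → ℝ) (x : ℝ) :
    qInvDeriv q f (q * x) = qDeriv q f x := by
  rw [qInvDeriv_eq_qDeriv_div hq, mul_div_cancel_left₀ x hq]

theorem qDeriv_qInvDeriv (hq : q ≠ 0) (f : ℝ → ℝ) (x : ℝ) :
    qDeriv q (qInvDeriv q f) x = (1 / q) * qInvDeriv q (qDeriv q f) x := by
  conv_lhs => rw [qDeriv, qInvDeriv_eq_qDeriv_div hq, qInvDeriv_eq_qDeriv_div hq,
    mul_div_cancel_left₀ x hq]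
  rw [qInvDeriv]
  field_simp

theorem qDeriv_qWronskian (hq : q ≠ 0) (y h : ℝ → ℝ) (x : ℝ) :
    qDeriv q (qWronskian q y h) x =
      y x * ((1 / q) * qInvDeriv q (qDeriv q h) x)
        - h x * ((1 / q) * qInvDeriv q (qDeriv q y) x) := by
  rw [show qWronskian q y h = fun t => y t * qInvDeriv q h t - h t * qInvDeriv q y t from rfl,
    qDeriv_sub, qDeriv_mul, qDeriv_mul, qDeriv_qInvDeriv hq,
    qDeriv_qInvDeriv hq, qInvDeriv_mul_left hq, qInvDeriv_mul_left hq]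
  ring

theorem qDeriv_mul_qWronskian (hq : q ≠ 0) (hq1 : q ≠ 1) {p r f : ℝ → ℝ} (y h : ℝ → ℝ) {x : ℝ}
    (hx : x ≠ 0) (hf : qDeriv q f x = p x * f x) :
    qDeriv q (fun t => f t * qWronskian q y h t) x =
      f x * (y x * qLagrangeOp q p r h x - h x * qLagrangeOp q p r y x) := by
  rw [qDeriv_mul, hf, qDeriv_qWronskian hq]
  simp only [qWronskian, qLagrangeOp, qInvDeriv_mul_left hq,
    apply_mul_eq_sub_qDeriv hq1 y hx, apply_mul_eq_sub_qDeriv hq1 h hx]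
  ring

end

/-- Lagrangian method for homogeneous second-order q-difference equations
(version with `D_q` in the first-order term). -/
theorem lagrangian_HSOqDE' (q : ℝ) (hq : 0 < q) (hq1 : q < 1)
    (p r y f h : ℝ → ℝ)
    (hy : ∀ x : ℝ, x ≠ 0 →
      (1 / q) * qInvDeriv q (qDeriv q y) x + p x * qDeriv q y x + r x * y x = 0)
    (hf : ∀ x : ℝ, x ≠ 0 → qDeriv q f x = p x * f x) :
    ∀ x : ℝ, x ≠ 0 →
      qDeriv q
        (fun t => f t * (y t * qInvDeriv q h t - h t * qInvDeriv q y t)) x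
      = f x * ((1 / q) * qInvDeriv q (qDeriv q h) x + p x * qDeriv q h x + r x * h x)
          * y x := by
  intro x hx
  have hLy : qLagrangeOp q p r y x = 0 := hy x hx
  calc _ = f x * (y x * qLagrangeOp q p r h x - h x * qLagrangeOp q p r y x) :=
        qDeriv_mul_qWronskian hq.ne' hq1.ne y h hx (hf x hx)
    _ = _ := by rw [hLy, qLagrangeOp]; ring
end

section
/- Let 0 < q < 1 and let ν be a real number with ν > −1. Then for all x > 0, the q-derivative at x of the function G(x) := (1−q)·x^{ν+1}·J_{ν+1}^{(3)}(x; q²) equals x^{ν+1}·J_ν^{(3)}(x; q²). (Equivalently, ∫ x^{ν+1} J_ν^{(3)}(x;q²) d_q x = (1−q)·x^{ν+1}·J_{ν+1}^{(3)}(x;q²).) -/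
/-- The finite q-shifted factorial `(z; q)_n`. -/
noncomputable def qPoch (z q : ℝ) (n : ℕ) : ℝ :=
  ∏ k ∈ Finset.range n, (1 - z * q ^ k)

/-- The infinite q-shifted factorial `(z; q)_∞`. -/
noncomputable def qPochInf (z q : ℝ) : ℝ :=
  ∏' k : ℕ, (1 - z * q ^ k)

/-- The third Jackson q-Bessel function `J_ν^{(3)}(x; q²)`. -/
noncomputable def J3 (q ν x : ℝ) : ℝ :=
  (qPochInf (q ^ (2 * ν + 2)) (q ^ 2) / qPochInf (q ^ 2) (q ^ 2)) *
    ∑' n : ℕ, ((-1 : ℝ) ^ n * q ^ (n * (n + 1)) * x ^ (2 * (n : ℝ) + ν)) /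
      (qPoch (q ^ 2) (q ^ 2) n *
        ∏ j ∈ Finset.range n, (1 - q ^ (2 * ν + 2 + 2 * (j : ℝ))))

/-! Write `a = q^{2ν+2}`. The `n`-th term of `x^{ν+1} J_{ν+1}^{(3)}(x;q²)` is homogeneous of
degree `2n+2ν+2` in `x`, so replacing `x` by `qx` multiplies it by `a q^{2n}`. Since
`(a;q²)_n (1 - a q^{2n}) = (a;q²)_{n+1} = (1 - a) (aq²;q²)_n`, the difference of the two series
is termwise `(1 - a) x` times the series of `x^{ν+1} J_ν^{(3)}(x;q²)`, and the factor `1 - a` is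
absorbed by the normalising constants: `(a;q²)_∞ = (1 - a) (aq²;q²)_∞`. -/

open Real Filter Topology Finset

theorem summable_of_succ_eq_mul_of_tendsto_zero {R : Type*} [NormedRing R] [CompleteSpace R]
    {f r : ℕ → R} (hf : ∀ n, f (n + 1) = f n * r n) (hr : Tendsto r atTop (𝓝 0)) :
    Summable f := by
  refine summable_of_ratio_norm_eventually_le (r := 1 / 2) (by norm_num) ?_
  filter_upwards [hr.norm.eventually_le_const (by norm_num : ‖(0 : R)‖ < 1 / 2)] with n hn
  calc ‖f (n + 1)‖ ≤ ‖f n‖ * ‖r n‖ := hf n ▸ norm_mul_le _ _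
    _ ≤ 1 / 2 * ‖f n‖ := by nlinarith [norm_nonneg (f n)]

theorem qPoch_succ (z q : ℝ) (n : ℕ) : qPoch z q (n + 1) = qPoch z q n * (1 - z * q ^ n) :=
  prod_range_succ _ n

theorem qPoch_succ' (z q : ℝ) (n : ℕ) : qPoch z q (n + 1) = (1 - z) * qPoch (z * q) q n := by
  simp only [qPoch, prod_range_succ', pow_succ, pow_zero, mul_one, mul_assoc, mul_comm]

theorem qPoch_pos {z q : ℝ} (hz : z < 1) (hq₀ : 0 ≤ q) (hq₁ : q ≤ 1) (n : ℕ) :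
    0 < qPoch z q n :=
  prod_pos fun k _ => by
    have hk₀ := pow_nonneg hq₀ k
    have hk₁ := pow_le_one₀ hq₀ hq₁ (n := k)
    rcases le_total 0 z with hz₀ | hz₀ <;> nlinarith

theorem multipliable_one_sub_mul_pow (z : ℝ) {q : ℝ} (hq : |q| < 1) :
    Multipliable fun k : ℕ => 1 - z * q ^ k := by
  simpa [sub_eq_add_neg] using multipliable_one_add_of_summable (f := fun k : ℕ => -(z * q ^ k))
    (by simpa [abs_mul] using (summable_geometric_of_lt_one (abs_nonneg q) hq).mul_left |z|)

theorem qPochInf_eq_one_sub_mul (z : ℝ) {q : ℝ} (hq : |q| < 1) :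
    qPochInf z q = (1 - z) * qPochInf (z * q) q := by
  have hshift : (fun k : ℕ => 1 - z * q ^ (k + 1)) = fun k => 1 - z * q * q ^ k := by
    ext k; ring
  rw [qPochInf, tprod_eq_zero_mul' (hshift ▸ multipliable_one_sub_mul_pow (z * q) hq), hshift,
    pow_zero, mul_one, qPochInf]

theorem prod_one_sub_rpow_eq_qPoch {q : ℝ} (hq : 0 < q) (a : ℝ) (n : ℕ) :
    ∏ j ∈ range n, (1 - q ^ (a + 2 * (j : ℝ))) = qPoch (q ^ a) (q ^ 2) n :=
  prod_congr rfl fun j _ => by rw [rpow_add hq, rpow_mul_natCast hq.le, rpow_two]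

noncomputable def J3Term (q ν x : ℝ) (n : ℕ) : ℝ :=
  (-1) ^ n * q ^ (n * (n + 1)) * x ^ (2 * (n : ℝ) + ν) /
    (qPoch (q ^ 2) (q ^ 2) n * qPoch (q ^ (2 * ν + 2)) (q ^ 2) n)

theorem J3_eq_mul_tsum {q : ℝ} (hq : 0 < q) (ν x : ℝ) :
    J3 q ν x = qPochInf (q ^ (2 * ν + 2)) (q ^ 2) / qPochInf (q ^ 2) (q ^ 2) *
      ∑' n, J3Term q ν x n := by
  simp only [J3, J3Term, prod_one_sub_rpow_eq_qPoch hq]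

theorem J3Term_succ (q ν : ℝ) {x : ℝ} (hx : 0 < x) (n : ℕ) :
    J3Term q ν x (n + 1) = J3Term q ν x n *
      (-(q ^ 2 * (q ^ 2) ^ n * x ^ 2) /
        ((1 - q ^ 2 * (q ^ 2) ^ n) * (1 - q ^ (2 * ν + 2) * (q ^ 2) ^ n))) := by
  have hxpow : x ^ (2 * ((n + 1 : ℕ) : ℝ) + ν) = x ^ (2 * (n : ℝ) + ν) * x ^ 2 := by
    rw [← rpow_two, ← rpow_add hx]; push_cast; ring_nf
  have hqpow : q ^ ((n + 1) * (n + 1 + 1)) = q ^ (n * (n + 1)) * (q ^ 2 * (q ^ 2) ^ n) := by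
    rw [← pow_mul, ← pow_add, ← pow_add]; ring_nf
  rw [J3Term, J3Term, qPoch_succ, qPoch_succ, hxpow, hqpow, div_mul_div_comm]
  congr 1 <;> ring

theorem summable_J3Term {q : ℝ} (hq : |q| < 1) (ν : ℝ) {x : ℝ} (hx : 0 < x) :
    Summable (J3Term q ν x) := by
  refine summable_of_succ_eq_mul_of_tendsto_zero (J3Term_succ q ν hx) ?_
  have hpow : Tendsto (fun n : ℕ => (q ^ 2) ^ n) atTop (𝓝 0) :=
    tendsto_pow_atTop_nhds_zero_of_abs_lt_one (by rwa [abs_sq, sq_lt_one_iff_abs_lt_one])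
  have hcont : ContinuousAt (fun t => -(q ^ 2 * t * x ^ 2) /
      ((1 - q ^ 2 * t) * (1 - q ^ (2 * ν + 2) * t))) 0 := by
    fun_prop (disch := norm_num)
  simpa [Function.comp_def] using hcont.tendsto.comp hpow

theorem rpow_mul_J3Term {q ν x : ℝ} (hx : 0 < x) (μ : ℝ) (n : ℕ) :
    x ^ μ * J3Term q ν x n = (-1) ^ n * q ^ (n * (n + 1)) * x ^ (2 * (n : ℝ) + ν + μ) /
      (qPoch (q ^ 2) (q ^ 2) n * qPoch (q ^ (2 * ν + 2)) (q ^ 2) n) := by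
  rw [J3Term, rpow_add hx (2 * (n : ℝ) + ν) μ]; ring

theorem rpow_mul_J3Term_sub {q ν : ℝ} (hq : 0 < q) (hq1 : q < 1) (hν : -1 < ν) {x : ℝ}
    (hx : 0 < x) (n : ℕ) :
    x ^ (ν + 1) * J3Term q (ν + 1) x n - (q * x) ^ (ν + 1) * J3Term q (ν + 1) (q * x) n
      = (1 - q ^ (2 * ν + 2)) * (x * (x ^ (ν + 1) * J3Term q ν x n)) := by
  have ha : q ^ (2 * ν + 2) < 1 := rpow_lt_one hq.le hq1 (by linarith)
  have hp₀ : 0 ≤ q ^ 2 := by positivity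
  have hp₁ : q ^ 2 ≤ 1 := by nlinarith
  have hap : q ^ (2 * ν + 2) * q ^ 2 < 1 := by nlinarith [rpow_nonneg hq.le (2 * ν + 2)]
  have hshift : q ^ (2 * (ν + 1) + 2) = q ^ (2 * ν + 2) * q ^ 2 := by
    rw [show 2 * (ν + 1) + 2 = 2 * ν + 2 + 2 by ring, rpow_add hq, rpow_two]
  have hscale : (q * x) ^ (2 * (n : ℝ) + (ν + 1) + (ν + 1))
      = q ^ (2 * ν + 2) * (q ^ 2) ^ n * x ^ (2 * (n : ℝ) + (ν + 1) + (ν + 1)) := by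
    rw [mul_rpow hq.le hx.le, show 2 * (n : ℝ) + (ν + 1) + (ν + 1) = 2 * ν + 2 + 2 * n by ring,
      rpow_add hq, rpow_mul_natCast hq.le, rpow_two]
  have hx1 : x * x ^ (2 * (n : ℝ) + ν + (ν + 1))
      = x ^ (2 * (n : ℝ) + (ν + 1) + (ν + 1)) := by
    rw [show 2 * (n : ℝ) + (ν + 1) + (ν + 1) = 2 * n + ν + (ν + 1) + 1 by ring,
      rpow_add hx _ 1, rpow_one, mul_comm]
  have hpoch : qPoch (q ^ (2 * ν + 2)) (q ^ 2) n * (1 - q ^ (2 * ν + 2) * (q ^ 2) ^ n)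
      = (1 - q ^ (2 * ν + 2)) * qPoch (q ^ (2 * ν + 2) * q ^ 2) (q ^ 2) n := by
    rw [← qPoch_succ, qPoch_succ']
  have hP := (qPoch_pos (by nlinarith) hp₀ hp₁ n : 0 < qPoch (q ^ 2) (q ^ 2) n).ne'
  have hA := (qPoch_pos ha hp₀ hp₁ n).ne'
  have hA' := (qPoch_pos hap hp₀ hp₁ n).ne'
  rw [rpow_mul_J3Term hx, rpow_mul_J3Term (mul_pos hq hx), rpow_mul_J3Term hx, hshift, hscale,
    mul_div_assoc', ← mul_assoc x, mul_comm x, mul_assoc _ x, hx1, div_sub_div_same,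
    mul_div_assoc', div_eq_div_iff (mul_ne_zero hP hA') (mul_ne_zero hP hA)]
  linear_combination (-1) ^ n * q ^ (n * (n + 1)) * x ^ (2 * (n : ℝ) + (ν + 1) + (ν + 1)) *
    qPoch (q ^ 2) (q ^ 2) n * hpoch

theorem rpow_mul_J3_sub {q ν : ℝ} (hq : 0 < q) (hq1 : q < 1) (hν : -1 < ν) {x : ℝ}
    (hx : 0 < x) :
    x ^ (ν + 1) * J3 q (ν + 1) x - (q * x) ^ (ν + 1) * J3 q (ν + 1) (q * x)
      = x * (x ^ (ν + 1) * J3 q ν x) := by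
  have hq' : |q| < 1 := abs_lt.2 ⟨by linarith, hq1⟩
  have hconst : qPochInf (q ^ (2 * ν + 2)) (q ^ 2)
      = (1 - q ^ (2 * ν + 2)) * qPochInf (q ^ (2 * (ν + 1) + 2)) (q ^ 2) := by
    rw [qPochInf_eq_one_sub_mul _ (by rwa [abs_sq, sq_lt_one_iff_abs_lt_one]), ← rpow_two,
      ← rpow_add hq]
    ring_nf
  have hseries : x ^ (ν + 1) * ∑' n, J3Term q (ν + 1) x n
        - (q * x) ^ (ν + 1) * ∑' n, J3Term q (ν + 1) (q * x) n
      = (1 - q ^ (2 * ν + 2)) * (x * (x ^ (ν + 1) * ∑' n, J3Term q ν x n)) := by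
    rw [← tsum_mul_left, ← tsum_mul_left, ← Summable.tsum_sub
      ((summable_J3Term hq' _ hx).mul_left _) ((summable_J3Term hq' _ (mul_pos hq hx)).mul_left _)]
    simp only [rpow_mul_J3Term_sub hq hq1 hν hx, tsum_mul_left]
  rw [J3_eq_mul_tsum hq, J3_eq_mul_tsum hq, J3_eq_mul_tsum hq, hconst]
  linear_combination
    (qPochInf (q ^ (2 * (ν + 1) + 2)) (q ^ 2) / qPochInf (q ^ 2) (q ^ 2)) * hseries

/-- `∫ x^{ν+1} J_ν^{(3)}(x;q²) d_q x = (1−q) x^{ν+1} J_{ν+1}^{(3)}(x;q²)`. -/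
theorem qIntegral_J3_nu (q ν : ℝ) (hq : 0 < q) (hq1 : q < 1) (hν : -1 < ν) :
    ∀ x : ℝ, 0 < x →
      qDeriv q (fun t => (1 - q) * t ^ (ν + 1) * J3 q (ν + 1) t) x
        = x ^ (ν + 1) * J3 q ν x := by
  intro x hx
  rw [qDeriv, div_eq_iff (mul_pos (sub_pos.2 hq1) hx).ne']
  linear_combination (1 - q) * rpow_mul_J3_sub hq hq1 hν hx
end
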